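/- Let β(ε) = 2ν + 2ν_tur [ε:ε]^{1/2} with ν, ν_tur ≥ 0 on 3×3 symmetric matrices. Then the map ε ↦ β(ε)ε is monotone: [β(ε₁)ε₁ − β(ε₂)ε₂ : ε₁ − ε₂] ≥ 0 for all symmetric ε₁, ε₂. -/

import Mathlib

open RealInnerProductSpace

section Monotone

variable {E : Type*} [NormedAddCommGroup E] [InnerProductSpace ℝ E]

theorem rpow_half_real_inner_self (x : E) : ⟪x, x⟫ ^ ((1 : ℝ) / 2) = ‖x‖ := by
  rw [← Real.sqrt_eq_rpow, real_inner_self_eq_norm_sq, Real.sqrt_sq (norm_nonneg x)]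

/-- By Cauchy–Schwarz the pairing is at least `(‖x‖ + ‖y‖) (‖x‖ - ‖y‖)²`. -/
theorem real_inner_norm_smul_sub_norm_smul_nonneg (x y : E) :
    0 ≤ ⟪‖x‖ • x - ‖y‖ • y, x - y⟫ := by
  have hxy : ⟪x, y⟫ ≤ ‖x‖ * ‖y‖ := real_inner_le_norm x y
  have expand : ⟪‖x‖ • x - ‖y‖ • y, x - y⟫
      = ‖x‖ ^ 3 + ‖y‖ ^ 3 - (‖x‖ + ‖y‖) * ⟪x, y⟫ := by
    simp only [inner_sub_left, inner_sub_right, real_inner_smul_left, real_inner_self_eq_norm_sq,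
      real_inner_comm x y]
    ring
  calc (0 : ℝ) ≤ (‖x‖ + ‖y‖) * (‖x‖ - ‖y‖) ^ 2 := by positivity
    _ = ‖x‖ ^ 3 + ‖y‖ ^ 3 - (‖x‖ + ‖y‖) * (‖x‖ * ‖y‖) := by ring
    _ ≤ ⟪‖x‖ • x - ‖y‖ • y, x - y⟫ := by
      rw [expand]
      gcongr

theorem real_inner_affine_norm_smul_sub_nonneg {a b : ℝ} (ha : 0 ≤ a) (hb : 0 ≤ b) (x y : E) :
    0 ≤ ⟪(a + b * ‖x‖) • x - (a + b * ‖y‖) • y, x - y⟫ := by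
  have split : (a + b * ‖x‖) • x - (a + b * ‖y‖) • y
      = a • (x - y) + b • (‖x‖ • x - ‖y‖ • y) := by
    simp only [add_smul, mul_smul, smul_sub]
    abel
  rw [split, inner_add_left, real_inner_smul_left, real_inner_smul_left]
  exact add_nonneg (mul_nonneg ha real_inner_self_nonneg)
    (mul_nonneg hb (real_inner_norm_smul_sub_norm_smul_nonneg x y))

end Monotone

theorem smagorinsky_monotone_general (ν νtur : ℝ) (hν : 0 ≤ ν) (hνtur : 0 ≤ νtur)
    (ε₁ ε₂ : EuclideanSpace ℝ (Fin 3 × Fin 3)) :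
    (inner ℝ ((2 * ν + 2 * νtur * (inner ℝ ε₁ ε₁ : ℝ) ^ ((1:ℝ)/2)) • ε₁
          - (2 * ν + 2 * νtur * (inner ℝ ε₂ ε₂ : ℝ) ^ ((1:ℝ)/2)) • ε₂) (ε₁ - ε₂) : ℝ)
      ≥ 0 := by
  rw [rpow_half_real_inner_self, rpow_half_real_inner_self]
  exact real_inner_affine_norm_smul_sub_nonneg (by positivity) (by positivity) ε₁ ε₂

/-- Monotonicity of the Smagorinsky stress `ε ↦ β(ε)ε`, `β(ε) = 2ν + 2ν_tur [ε:ε]^{1/2}`,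
with `ν, ν_tur ≥ 0`, on (3×3)-matrices identified with `EuclideanSpace ℝ (Fin 3 × Fin 3)`
(Frobenius inner product). -/
theorem smagorinsky_monotone (ν νtur : ℝ) (hν : 0 ≤ ν) (hνtur : 0 ≤ νtur)
    (ε₁ ε₂ : EuclideanSpace ℝ (Fin 3 × Fin 3))
    (hsym₁ : ∀ i j : Fin 3, ε₁ (i, j) = ε₁ (j, i))
    (hsym₂ : ∀ i j : Fin 3, ε₂ (i, j) = ε₂ (j, i)) :
    (inner ℝ ((2 * ν + 2 * νtur * (inner ℝ ε₁ ε₁ : ℝ) ^ ((1:ℝ)/2)) • ε₁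
          - (2 * ν + 2 * νtur * (inner ℝ ε₂ ε₂ : ℝ) ^ ((1:ℝ)/2)) • ε₂) (ε₁ - ε₂) : ℝ)
      ≥ 0 :=
  smagorinsky_monotone_general ν νtur hν hνtur ε₁ ε₂
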